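/- arXiv:1602.07965 — 2 statements merged into one kernel-verified Lean document; each statement's English description precedes it below -/
import Mathlib

section
/- For a connected, locally path connected space X, the following are equivalent: (1) π₁^wh(X,x₀) is T₀; (2) π₁^wh(X,x₀) is T₁; (3) π₁^wh(X,x₀) is T₂ (Hausdorff); (4) π₁^wh(X,x₀) is T₃ (regular and T₁); (5) π₁^s(X,x₀) is the trivial subgroup; (6) π₁^wh(X,x₀) is totally separated. Moreover, π₁^wh(X,x₀) is always regular. -/
open CategoryTheory unitInterval Topology

universe u v

noncomputable section

attribute [local instance] Path.Homotopic.setoid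

namespace GCPaper

variable {X : Type u} [TopologicalSpace X]

/-- The homotopy class of a loop, as an element of the fundamental group. -/
def loopClass {x : X} (γ : Path x x) : FundamentalGroup X x :=
  (⟦γ⟧ : (⟨x⟩ : FundamentalGroupoid X) ⟶ ⟨x⟩)

/-- The homomorphism on fundamental groups induced by a continuous map. -/
def π₁map {A B : Type u} [TopologicalSpace A] [TopologicalSpace B] (f : C(A, B)) (a : A) :
    FundamentalGroup A a →* FundamentalGroup B (f a) :=
  Functor.mapEnd (FundamentalGroupoid.mk (a : TopCat.of A))
    ((FundamentalGroupoid.fundamentalGroupoidFunctor.map (TopCat.ofHom f) :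
        Grpd.of (FundamentalGroupoid (TopCat.of A)) ⟶ Grpd.of (FundamentalGroupoid (TopCat.of B))) :
      FundamentalGroupoid (TopCat.of A) ⥤ FundamentalGroupoid (TopCat.of B))

/-- Transport of the fundamental group along an equality of basepoints. -/
def eqCast {x x' : X} (h : x = x') : FundamentalGroup X x ≃* FundamentalGroup X x' := by
  subst h; exact MulEquiv.refl _

/-- `f₁*π₁(A, a)`, the image of the fundamental group of `A` in the fundamental group of `B`,
based at a point `x` equal to `f a`. -/
def imageSubgroup {A : Type u} [TopologicalSpace A]
    (f : C(A, X)) (a : A) (x : X) (h : f a = x) : Subgroup (FundamentalGroup X x) :=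
  Subgroup.map (eqCast h).toMonoidHom (π₁map f a).range

/-- `i_*π₁(U, x)`, the image of the fundamental group of `U` in the fundamental group of `X`
under the inclusion-induced homomorphism. -/
def iStar (x : X) (U : Set X) (hx : x ∈ U) : Subgroup (FundamentalGroup X x) :=
  imageSubgroup ⟨(Subtype.val : U → X), continuous_subtype_val⟩ ⟨x, hx⟩ x rfl

/-- The set of homotopy classes of small loops at `x` :
loops which have a representative in every open neighbourhood of `x`. -/
def smallSet (x : X) : Set (FundamentalGroup X x) :=
  { g | ∀ (U : Set X) (_ : IsOpen U) (hx : x ∈ U), g ∈ iStar x U hx }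

/-- Conjugation of a loop class at `x` along a path `α` from `x₀` to `x` :
`g ↦ [α ∗ g ∗ α⁻¹]`. -/
def conjAlong {x₀ x : X} (α : Path x₀ x) (g : FundamentalGroup X x) : FundamentalGroup X x₀ :=
  (FundamentalGroup.fundamentalGroupMulEquivOfPath α).symm g

/-- The subgroup `[α⁻¹ H α]` of `π₁(X, x)` for a path `α` from `x₀` to `x` and
`H ≤ π₁(X, x₀)`. -/
def conjSubgroup {x₀ x : X} (α : Path x₀ x) (H : Subgroup (FundamentalGroup X x₀)) :
    Subgroup (FundamentalGroup X x) :=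
  Subgroup.map (FundamentalGroup.fundamentalGroupMulEquivOfPath α).toMonoidHom H

/-- `π₁^sg(X, x₀)`: the subgroup generated by small loops conjugated along paths from `x₀`. -/
def sgSubgroup (x₀ : X) : Subgroup (FundamentalGroup X x₀) :=
  Subgroup.closure { g | ∃ (x : X) (α : Path x₀ x) (s : FundamentalGroup X x),
    s ∈ smallSet x ∧ g = conjAlong α s }

/-- The Spanier group of an open cover. -/
def spanierGroup (x₀ : X) (𝒰 : Set (Set X)) : Subgroup (FundamentalGroup X x₀) :=
  Subgroup.closure { g | ∃ (x : X) (α : Path x₀ x) (U : Set X) (_ : U ∈ 𝒰) (β : Path x x),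
    Set.range β ⊆ U ∧ g = conjAlong α (loopClass β) }

/-- `X` is semilocally small generated (at `x₀`). -/
def SemilocallySmallGenerated (x₀ : X) : Prop :=
  ∃ 𝒰 : Set (Set X), (∀ U ∈ 𝒰, IsOpen U) ∧ ⋃₀ 𝒰 = Set.univ ∧
    spanierGroup x₀ 𝒰 ≤ sgSubgroup x₀

/-- `X` is homotopically Hausdorff relative to the subgroup `H`. -/
def HomotopicallyHausdorffRel (x₀ : X) (H : Subgroup (FundamentalGroup X x₀)) : Prop :=
  ∀ (x : X) (α : Path x₀ x) (g : FundamentalGroup X x₀), g ∉ H →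
    ∃ U : Set X, IsOpen U ∧ x ∈ U ∧
      ∀ γ : Path x x, Set.range γ ⊆ U → ¬ ∃ h ∈ H, conjAlong α (loopClass γ) = h * g

/-- The quasitopological fundamental group topology: the quotient topology induced by the
compact-open topology on the loop space. -/
def qtop (X : Type u) [TopologicalSpace X] (x : X) : TopologicalSpace (FundamentalGroup X x) :=
  TopologicalSpace.coinduced (fun γ : Path x x => loopClass γ) inferInstance

/-- The basic sets of the whisker topology on the fundamental group. -/
def whBasis (X : Type u) [TopologicalSpace X] (x₀ : X) : Set (Set (FundamentalGroup X x₀)) :=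
  { S | ∃ (g : FundamentalGroup X x₀) (U : Set X) (_ : IsOpen U) (hx : x₀ ∈ U),
      S = (g * ·) '' (iStar x₀ U hx : Set (FundamentalGroup X x₀)) }

/-- The whisker topology on the fundamental group. -/
def whTop (X : Type u) [TopologicalSpace X] (x₀ : X) :
    TopologicalSpace (FundamentalGroup X x₀) :=
  TopologicalSpace.generateFrom (whBasis X x₀)

/-- The unique lifting property for a pointed map `p : (X', x') → (X, p x')`. -/
def HasUL {X' : Type u} [TopologicalSpace X'] (p : C(X', X)) (x' : X') : Prop :=
  ∀ (Y : Type u) (_ : TopologicalSpace Y) (y : Y), ConnectedSpace Y → LocallyPathConnectedSpace Y →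
    ∀ (f : C(Y, X)) (hf : f y = p x'),
      imageSubgroup f y (p x') hf ≤ imageSubgroup p x' (p x') rfl →
      ∃! g : C(Y, X'), g y = x' ∧ p.comp g = f

/-- `H` is a generalized covering subgroup of `π₁(X, x₀)`. -/
def IsGCSubgroup (x₀ : X) (H : Subgroup (FundamentalGroup X x₀)) : Prop :=
  ∃ (X' : Type u) (_ : TopologicalSpace X') (x' : X') (p : C(X', X)) (hp : p x' = x₀),
    ConnectedSpace X' ∧ LocallyPathConnectedSpace X' ∧ HasUL p x' ∧ imageSubgroup p x' x₀ hp = H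

/-- `π₁^gc(X, x₀)`: the intersection of all generalized covering subgroups. -/
def gcSubgroup (X : Type u) [TopologicalSpace X] (x₀ : X) : Subgroup (FundamentalGroup X x₀) :=
  sInf { H | IsGCSubgroup x₀ H }

/-- Unique path lifting: paths lift with prescribed initial point, and lifts with the same
initial point are unique. -/
def UniquePathLifts {X' : Type u} [TopologicalSpace X'] (p : X' → X) : Prop :=
  (∀ (γ : C(I, X)) (x' : X'), p x' = γ 0 → ∃ γ' : C(I, X'), γ' 0 = x' ∧ p ∘ γ' = γ) ∧
  (∀ γ₁ γ₂ : C(I, X'), γ₁ 0 = γ₂ 0 → p ∘ γ₁ = p ∘ γ₂ → γ₁ = γ₂)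

/-- `H` is a semicovering subgroup of `π₁(X, x₀)`. -/
def IsSemicoveringSubgroup (x₀ : X) (H : Subgroup (FundamentalGroup X x₀)) : Prop :=
  ∃ (X' : Type u) (_ : TopologicalSpace X') (x' : X') (p : C(X', X)) (hp : p x' = x₀),
    ConnectedSpace X' ∧ LocallyPathConnectedSpace X' ∧ Function.Surjective p ∧
    IsLocalHomeomorph p ∧ UniquePathLifts (p : X' → X) ∧ imageSubgroup p x' x₀ hp = H

/-- `H` is a covering subgroup of `π₁(X, x₀)`. -/
def IsCoveringSubgroup (x₀ : X) (H : Subgroup (FundamentalGroup X x₀)) : Prop :=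
  ∃ (X' : Type u) (_ : TopologicalSpace X') (x' : X') (p : C(X', X)) (hp : p x' = x₀),
    ConnectedSpace X' ∧ LocallyPathConnectedSpace X' ∧ IsCoveringMap p ∧ imageSubgroup p x' x₀ hp = H

/-- `X` is semilocally `K`-connected at `x`. -/
def SemilocallyConnectedAt (x : X) (K : Subgroup (FundamentalGroup X x)) : Prop :=
  ∃ (U : Set X) (_ : IsOpen U) (hx : x ∈ U), iStar x U hx ≤ K

section WhiskerSpace

variable {X : Type u} [TopologicalSpace X] {x₀ : X}

/-- The space of paths in `X` starting at `x₀`, recorded with their endpoints. -/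
def PathStar (x₀ : X) : Type u := Σ x : X, Path x₀ x

/-- The relation identifying two paths `α, β` from `x₀` when they have the same endpoint and
`[α ∗ β⁻¹] ∈ H`. -/
def whiskerRel (H : Subgroup (FundamentalGroup X x₀)) :
    PathStar x₀ → PathStar x₀ → Prop := fun a b =>
  ∃ h : b.1 = a.1, loopClass (a.2.trans (h ▸ b.2 : Path x₀ a.1).symm) ∈ H

/-- The space `X̃_H` of `∼_H`-classes of paths starting at `x₀`. -/
def XH (H : Subgroup (FundamentalGroup X x₀)) : Type u := Quot (whiskerRel H)

/-- The endpoint projection `p_H : X̃_H → X`. -/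
def pH (H : Subgroup (FundamentalGroup X x₀)) : XH H → X :=
  Quot.lift (fun a => a.1) (by rintro a b ⟨h, -⟩; exact h.symm)

/-- The point of `X̃_H` given by the class of a path from `x₀`. -/
def XH.mk (H : Subgroup (FundamentalGroup X x₀)) (a : PathStar x₀) : XH H :=
  Quot.mk (whiskerRel H) a

/-- The basepoint `ẽ_H` of `X̃_H`: the class of the constant path at `x₀`. -/
def eH (H : Subgroup (FundamentalGroup X x₀)) : XH H :=
  XH.mk H ⟨x₀, Path.refl x₀⟩

/-- The basic set `(U, ⟨α⟩_H)` of the whisker topology on `X̃_H`: classes of continuations of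
`α` inside `U`. -/
def contSet (H : Subgroup (FundamentalGroup X x₀)) (a : PathStar x₀) (U : Set X) :
    Set (XH H) :=
  { z | ∃ (y : X) (γ : Path a.1 y), Set.range γ ⊆ U ∧ z = XH.mk H ⟨y, a.2.trans γ⟩ }

/-- The whisker topology on `X̃_H`. -/
instance XH.topologicalSpace (H : Subgroup (FundamentalGroup X x₀)) :
    TopologicalSpace (XH H) :=
  TopologicalSpace.generateFrom
    { S | ∃ (a : PathStar x₀) (U : Set X), IsOpen U ∧ S = contSet H a U }

lemma XH.mk_trans_refl (H : Subgroup (FundamentalGroup X x₀)) (a : PathStar x₀) :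
    XH.mk H ⟨a.1, a.2.trans (Path.refl a.1)⟩ = XH.mk H a := by
  apply Quot.sound
  refine ⟨rfl, ?_⟩
  have h1 : (a.2.trans (Path.refl a.1)).Homotopic a.2 := ⟨Path.Homotopy.transRefl a.2⟩
  have h2 : ((a.2.trans (Path.refl a.1)).trans a.2.symm).Homotopic (a.2.trans a.2.symm) :=
    h1.hcomp (Path.Homotopic.refl _)
  have h3 : (a.2.trans a.2.symm).Homotopic (Path.refl x₀) :=
    ⟨(Path.Homotopy.reflTransSymm a.2).symm⟩
  have : loopClass ((a.2.trans (Path.refl a.1)).trans a.2.symm) = 1 := by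
    exact (Quotient.sound (h2.trans h3) : _ = (⟦Path.refl x₀⟧ : Path.Homotopic.Quotient x₀ x₀))
  exact this ▸ H.one_mem

lemma continuous_pH (H : Subgroup (FundamentalGroup X x₀)) : Continuous (pH H) := by
  rw [continuous_def]
  intro U hU
  have : pH H ⁻¹' U = ⋃ (a : PathStar x₀) (_ : a.1 ∈ U), contSet H a U := by
    ext z
    constructor
    · intro hz
      obtain ⟨a, rfl⟩ := Quot.exists_rep z
      refine Set.mem_iUnion₂.mpr ⟨a, hz, a.1, Path.refl a.1, ?_, (XH.mk_trans_refl H a).symm⟩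
      rw [Path.refl_range]
      exact Set.singleton_subset_iff.mpr hz
    · intro hz
      obtain ⟨a, ha, y, γ, hγ, rfl⟩ := Set.mem_iUnion₂.mp hz
      have : y ∈ U := hγ ⟨1, γ.target⟩
      exact this
  rw [this]
  exact isOpen_iUnion fun a => isOpen_iUnion fun ha =>
    TopologicalSpace.isOpen_generateFrom_of_mem ⟨a, U, hU, rfl⟩

/-- The endpoint projection `p_H` as a continuous map. -/
def pHMap (H : Subgroup (FundamentalGroup X x₀)) : C(XH H, X) :=
  ⟨pH H, continuous_pH H⟩

end WhiskerSpace

end GCPaper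

open GCPaper

/-! The whisker topology is the topology generated by the left cosets of the subgroups
`i_*π₁(U, x₀)`. A left coset of a subgroup is clopen in such a topology, its complement being
the union of the other cosets, so `π₁^wh(X, x₀)` has a basis of clopen sets; this makes it
regular and makes T₀ already imply total separatedness. Finally, `g` and `1` have the same
neighbourhoods exactly when `g` lies in every `i_*π₁(U, x₀)`, i.e. when `g` is small. -/

section ClopenBasis

open TopologicalSpace

variable {X : Type*}

theorem isTopologicalBasis_isClopen_of_eq_generateFrom [t : TopologicalSpace X]
    {s : Set (Set X)} (ht : t = generateFrom s) (hs : ∀ u ∈ s, IsClopen u) :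
    IsTopologicalBasis {u : Set X | IsClopen u} :=
  (isTopologicalBasis_of_subbasis ht).of_isOpen_of_subset (fun _ hu ↦ hu.isOpen) <| by
    rintro _ ⟨f, ⟨hf, hfs⟩, rfl⟩
    show IsClopen (⋂₀ f)
    rw [Set.sInter_eq_biInter]
    exact hf.isClopen_biInter fun u hu ↦ hs u (hfs hu)

theorem regularSpace_of_isTopologicalBasis_isClopen [TopologicalSpace X]
    (h : IsTopologicalBasis {u : Set X | IsClopen u}) : RegularSpace X :=
  have := CompletelyRegularSpace.of_isTopologicalBasis_clopens h
  inferInstance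

theorem tfae_separation_of_isTopologicalBasis_isClopen [TopologicalSpace X]
    (h : IsTopologicalBasis {u : Set X | IsClopen u}) :
    List.TFAE [T0Space X, T1Space X, T2Space X, RegularSpace X ∧ T1Space X,
      TotallySeparatedSpace X] := by
  tfae_have 1 → 5 := fun _ ↦ totallySeparatedSpace_of_t0_of_basis_clopen h
  tfae_have 5 → 3 := fun _ ↦ inferInstance
  tfae_have 3 → 4 := fun _ ↦ ⟨regularSpace_of_isTopologicalBasis_isClopen h, inferInstance⟩
  tfae_have 4 → 2 := And.right
  tfae_have 2 → 1 := fun _ ↦ inferInstance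
  tfae_finish

end ClopenBasis

section CosetTopology

open TopologicalSpace Pointwise

variable {G : Type*} [Group G] {ι : Type*}

def cosetTopology (K : ι → Subgroup G) : TopologicalSpace G :=
  generateFrom {S | ∃ (g : G) (i : ι), S = g • (K i : Set G)}

variable [t : TopologicalSpace G] {K : ι → Subgroup G} (ht : t = cosetTopology K)
include ht

theorem isClopen_leftCoset_of_eq_cosetTopology (g : G) (i : ι) :
    IsClopen (g • (K i : Set G)) := by
  have hopen (h : G) : IsOpen (h • (K i : Set G)) := by
    rw [ht]; exact isOpen_generateFrom_of_mem ⟨h, i, rfl⟩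
  refine ⟨?_, hopen g⟩
  rw [← isOpen_compl_iff, isOpen_iff_forall_mem_open]
  intro h hh
  refine ⟨h • (K i : Set G), fun x hxh hxg ↦ hh ?_, hopen h, mem_own_leftCoset _ h⟩
  rw [mem_leftCoset_iff] at hxh hxg ⊢
  simpa [mul_assoc] using (K i).mul_mem hxg ((K i).inv_mem hxh)

theorem isTopologicalBasis_isClopen_of_eq_cosetTopology :
    IsTopologicalBasis {u : Set G | IsClopen u} := by
  refine isTopologicalBasis_isClopen_of_eq_generateFrom ht ?_
  rintro _ ⟨g, i, rfl⟩
  exact isClopen_leftCoset_of_eq_cosetTopology ht g i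

theorem t0Space_iff_iInf_eq_bot_of_eq_cosetTopology : T0Space G ↔ ⨅ i, K i = ⊥ := by
  constructor
  · intro _
    refine (Subgroup.eq_bot_iff_forall _).mpr fun g hg ↦ Inseparable.eq ?_
    rw [Subgroup.mem_iInf] at hg
    have hcoset (h : G) (i : ι) : g ∈ h • (K i : Set G) ↔ (1 : G) ∈ h • (K i : Set G) := by
      rw [mem_leftCoset_iff, mem_leftCoset_iff, mul_one, SetLike.mem_coe, SetLike.mem_coe,
        Subgroup.mul_mem_cancel_right _ (hg i)]
    unfold cosetTopology at ht
    subst ht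
    unfold Inseparable
    rw [nhds_generateFrom, nhds_generateFrom]
    congr! 3 with S
    constructor <;> rintro ⟨hS, h, i, rfl⟩
    exacts [⟨(hcoset h i).mp hS, h, i, rfl⟩, ⟨(hcoset h i).mpr hS, h, i, rfl⟩]
  · intro hbot
    have : T1Space G := t1Space_iff_exists_open.mpr fun g h hgh ↦ by
      obtain ⟨i, hi⟩ : ∃ i, g⁻¹ * h ∉ K i := by
        by_contra! hall
        rw [← Subgroup.mem_iInf, hbot, Subgroup.mem_bot, inv_mul_eq_one] at hall
        exact hgh hall
      exact ⟨g • (K i : Set G), (isClopen_leftCoset_of_eq_cosetTopology ht g i).isOpen,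
        mem_own_leftCoset _ g, by rwa [mem_leftCoset_iff]⟩
    infer_instance

end CosetTopology

namespace GCPaper

variable {X : Type u} [TopologicalSpace X]

open TopologicalSpace

theorem whTop_eq_cosetTopology (x₀ : X) :
    whTop X x₀ = cosetTopology fun U : OpenNhdsOf x₀ ↦ iStar x₀ U U.mem := by
  unfold whTop cosetTopology whBasis
  congr 1
  ext S
  constructor
  · rintro ⟨g, U, hU, hx, rfl⟩
    exact ⟨g, ⟨⟨U, hU⟩, hx⟩, rfl⟩
  · rintro ⟨g, U, rfl⟩
    exact ⟨g, U, U.isOpen, U.mem, rfl⟩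

theorem smallSet_eq_iInf (x₀ : X) :
    smallSet x₀ = ((⨅ U : OpenNhdsOf x₀, iStar x₀ U U.mem : Subgroup _) : Set _) := by
  ext g
  simp only [smallSet, Set.mem_ofPred_eq, SetLike.mem_coe, Subgroup.mem_iInf]
  exact ⟨fun h U ↦ h U U.isOpen U.mem, fun h U hU hx ↦ h ⟨⟨U, hU⟩, hx⟩⟩

end GCPaper

theorem statement_11_general {X : Type u} [TopologicalSpace X] (x₀ : X) :
    (@T0Space _ (whTop X x₀) ↔ @T1Space _ (whTop X x₀)) ∧
    (@T1Space _ (whTop X x₀) ↔ @T2Space _ (whTop X x₀)) ∧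
    (@T2Space _ (whTop X x₀) ↔ (@RegularSpace _ (whTop X x₀) ∧ @T1Space _ (whTop X x₀))) ∧
    ((@RegularSpace _ (whTop X x₀) ∧ @T1Space _ (whTop X x₀)) ↔
      smallSet x₀ = ({1} : Set (FundamentalGroup X x₀))) ∧
    (smallSet x₀ = ({1} : Set (FundamentalGroup X x₀)) ↔
      @TotallySeparatedSpace _ (whTop X x₀)) ∧
    @RegularSpace _ (whTop X x₀) := by
  let := whTop X x₀
  have ht := whTop_eq_cosetTopology x₀
  have hbasis := isTopologicalBasis_isClopen_of_eq_cosetTopology ht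
  have hsmall : smallSet x₀ = {1} ↔ T0Space (FundamentalGroup X x₀) := by
    rw [t0Space_iff_iInf_eq_bot_of_eq_cosetTopology ht, smallSet_eq_iInf, ← Subgroup.coe_bot,
      SetLike.coe_set_eq]
  have tfae := tfae_separation_of_isTopologicalBasis_isClopen hbasis
  exact ⟨tfae.out 0 1, tfae.out 1 2, tfae.out 2 3, (tfae.out 3 0).trans hsmall.symm,
    hsmall.trans (tfae.out 0 4), regularSpace_of_isTopologicalBasis_isClopen hbasis⟩

/-- For a connected, locally path connected space `X`, the following are
equivalent for `π₁^wh(X,x₀)`: T₀, T₁, T₂, T₃ (regular and T₁), triviality of `π₁^s(X,x₀)`,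
and total separatedness. Moreover `π₁^wh(X,x₀)` is always regular. -/
theorem statement_11 {X : Type u} [TopologicalSpace X] [ConnectedSpace X]
    [LocallyPathConnectedSpace X] (x₀ : X) :
    (@T0Space _ (whTop X x₀) ↔ @T1Space _ (whTop X x₀)) ∧
    (@T1Space _ (whTop X x₀) ↔ @T2Space _ (whTop X x₀)) ∧
    (@T2Space _ (whTop X x₀) ↔ (@RegularSpace _ (whTop X x₀) ∧ @T1Space _ (whTop X x₀))) ∧
    ((@RegularSpace _ (whTop X x₀) ∧ @T1Space _ (whTop X x₀)) ↔
      smallSet x₀ = ({1} : Set (FundamentalGroup X x₀))) ∧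
    (smallSet x₀ = ({1} : Set (FundamentalGroup X x₀)) ↔
      @TotallySeparatedSpace _ (whTop X x₀)) ∧
    @RegularSpace _ (whTop X x₀) :=
  statement_11_general x₀
end
end

section
/- Let X be a connected, locally path connected space and H ≤ π₁(X,x₀). Then X is semilocally path H-connected if and only if H is an open subgroup of π₁^qtop(X,x₀). -/
open CategoryTheory unitInterval Topology

universe u v

noncomputable section

attribute [local instance] Path.Homotopic.setoid

open GCPaper

/-!
Write `p ∼_H q` when `[p ∗ q⁻¹] ∈ H` for paths `p, q` from `x₀` with a common endpoint.

If `H` is open, the loops `γ` at `α(1)` with `[α ∗ γ ∗ α⁻¹] ∈ H` form a neighbourhood of the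
constant loop in the compact-open topology, so they contain all loops inside some neighbourhood
of `α(1)`.

Conversely, let `[δ] ∈ H`. Around each `δ(t)` pick an open set in which any two paths with the same
endpoints become `∼_H`-equivalent after `δ|[0,t]`, and subdivide `[0,1]` by a Lebesgue number so
that each `δ[t_k, t_{k+1}]` lies in one of these sets, `A_k`. Call `ε` close to `δ` if
`ε[t_k, t_{k+1}] ⊆ A_k` and `ε(t_{k+1})` lies in the path component of `δ(t_{k+1})` in
`A_k ∩ A_{k+1}`; by local path-connectedness this is a compact-open neighbourhood of `δ`. Walking
along the subdivision gives `ε|[0,t_{k+1}] ∼_H δ|[0,t_{k+1}] ∗ ω` for every path `ω` from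
`δ(t_{k+1})` to `ε(t_{k+1})` inside `A_k`, and at `t_{n+1} = 1` this is `ε ∼_H δ`, so `[ε] ∈ H`.
-/

open Set Filter

section GeneralTopology

variable {X : Type*} [TopologicalSpace X]

theorem ContinuousMap.exists_mem_nhds_forall_range_subset_mem {Y : Type*} [TopologicalSpace Y]
    {x : X} {s : Set C(Y, X)} (hs : s ∈ 𝓝 (ContinuousMap.const Y x)) :
    ∃ U ∈ 𝓝 x, ∀ f : C(Y, X), range f ⊆ U → f ∈ s := by
  have hle : (𝓝 x).lift' (fun U => {f : C(Y, X) | range f ⊆ U}) ≤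
      𝓝 (ContinuousMap.const Y x) := by
    simp only [ContinuousMap.nhds_compactOpen, le_iInf_iff, le_principal_iff]
    intro K _ U hU hKU
    rcases K.eq_empty_or_nonempty with rfl | ⟨k, hk⟩
    · exact univ_mem' fun f => mapsTo_empty _ _
    · exact mem_of_superset (mem_lift' (hU.mem_nhds (hKU hk)))
        fun f hf _ _ => hf (mem_range_self _)
  exact ((𝓝 x).basis_sets.lift' fun _ _ h _ hf => hf.trans h).mem_iff.mp (hle hs)

theorem Path.exists_isOpen_forall_range_subset_mem {x : X} {s : Set (Path x x)}
    (hs : s ∈ 𝓝 (Path.refl x)) :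
    ∃ U, IsOpen U ∧ x ∈ U ∧ ∀ γ : Path x x, range γ ⊆ U → γ ∈ s := by
  rw [nhds_induced, mem_comap] at hs
  obtain ⟨t, ht, hts⟩ := hs
  obtain ⟨V, hV, hVt⟩ := ContinuousMap.exists_mem_nhds_forall_range_subset_mem ht
  obtain ⟨U, hUV, hUo, hxU⟩ := mem_nhds_iff.mp hV
  exact ⟨U, hUo, hxU, fun γ hγ => hts (hVt _ (hγ.trans hUV))⟩

theorem Path.eventually_mapsTo {x y : X} {γ : Path x y} {K : Set I} {U : Set X}
    (hK : IsCompact K) (hU : IsOpen U) (h : MapsTo γ K U) :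
    ∀ᶠ γ' : Path x y in 𝓝 γ, MapsTo γ' K U :=
  ((ContinuousMap.isOpen_setOfPred_mapsTo hK hU).preimage continuous_induced_dom).mem_nhds h

theorem Path.range_subpath_subset {x y : X} {γ : Path x y} {s t : I} {A : Set X} (hst : s ≤ t)
    (h : MapsTo γ (Icc s t) A) : range (γ.subpath s t) ⊆ A := by
  rw [Path.range_subpath_of_le _ _ _ hst]
  exact h.image_subset

theorem Path.range_trans_subset {x y z : X} {γ₁ : Path x y} {γ₂ : Path y z} {A : Set X}
    (h₁ : range γ₁ ⊆ A) (h₂ : range γ₂ ⊆ A) : range (γ₁.trans γ₂) ⊆ A := by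
  rw [Path.trans_range]
  exact union_subset h₁ h₂

theorem unitInterval.exists_subdivision_subset {c : I → Set I} (hc : ∀ t, IsOpen (c t))
    (hmem : ∀ t, t ∈ c t) :
    ∃ τ : ℕ → I, τ 0 = 0 ∧ Monotone τ ∧ (∃ n, ∀ m ≥ n, τ m = 1) ∧
      ∀ k, ∃ j, uIcc j (τ k) ⊆ c j ∧ Icc (τ k) (τ (k + 1)) ⊆ c j := by
  have : LocallyPathConnectedSpace I := (convex_Icc (0 : ℝ) 1).locallyPathConnectedSpace
  obtain ⟨τ, h0, hmono, hend, hsub⟩ := exists_monotone_Icc_subset_open_cover_unitInterval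
    (c := fun t => pathComponentIn (c t) t) (fun t => (hc t).pathComponentIn t)
    (fun t _ => mem_iUnion.mpr ⟨t, mem_pathComponentIn_self (hmem t)⟩)
  refine ⟨τ, h0, hmono, hend, fun k => ?_⟩
  obtain ⟨j, hj⟩ := hsub k
  have hconn :=
    (isPathConnected_pathComponentIn (hmem j)).isConnected.isPreconnected.ordConnected
  exact ⟨j, (hconn.uIcc_subset (mem_pathComponentIn_self (hmem j))
      (hj ⟨le_rfl, hmono k.le_succ⟩)).trans pathComponentIn_subset,
    hj.trans pathComponentIn_subset⟩

end GeneralTopology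

namespace GCPaper

open CategoryTheory
open FundamentalGroupoid (mk)

variable {X : Type u} [TopologicalSpace X]

def pathHom {x y : X} (p : Path x y) : mk x ⟶ mk y := Path.Homotopic.Quotient.mk p

section PathClasses

variable {x y z : X}

theorem pathHom_trans (p : Path x y) (q : Path y z) :
    pathHom (p.trans q) = pathHom p ≫ pathHom q := rfl

theorem pathHom_symm (p : Path x y) : pathHom p.symm = inv (pathHom p) := by
  rw [← Groupoid.inv_eq_inv]; rfl

theorem pathHom_cast (p : Path x y) {x' y' : X} (hx : x' = x) (hy : y' = y) :
    pathHom (p.cast hx hy) =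
      eqToHom (congrArg mk hx) ≫ pathHom p ≫ eqToHom (congrArg mk hy.symm) := by
  subst hx hy; simp

theorem pathHom_subpath_trans (γ : Path x y) (s t r : I) :
    pathHom (γ.subpath s t) ≫ pathHom (γ.subpath t r) = pathHom (γ.subpath s r) :=
  Quotient.sound ⟨Path.Homotopy.subpathTransSubpath γ s t r⟩

theorem loopClass_eq_pathHom (γ : Path x x) : loopClass γ = pathHom γ := rfl

def initialPath (γ : Path x y) (t : I) : Path x (γ t) :=
  (γ.subpath 0 t).cast γ.source.symm rfl

def finalPath (γ : Path x y) (t : I) : Path (γ t) y :=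
  (γ.subpath t 1).cast rfl γ.target.symm

theorem range_initialPath (γ : Path x y) (t : I) :
    range (initialPath γ t) = γ '' uIcc 0 t := by
  rw [initialPath, Path.cast_coe, Path.range_subpath]

theorem range_finalPath (γ : Path x y) (t : I) : range (finalPath γ t) = γ '' uIcc t 1 := by
  rw [finalPath, Path.cast_coe, Path.range_subpath]

theorem range_initialPath_of_eq_zero (γ : Path x y) {t : I} (ht : t = 0) :
    range (initialPath γ t) = {γ t} := by
  subst ht; simp [range_initialPath]

theorem range_finalPath_of_eq_one (γ : Path x y) {t : I} (ht : t = 1) :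
    range (finalPath γ t) = {γ t} := by
  subst ht; simp [range_finalPath]

theorem pathHom_initialPath_trans_subpath (γ : Path x y) (s t : I) :
    pathHom (initialPath γ s) ≫ pathHom (γ.subpath s t) = pathHom (initialPath γ t) := by
  simp only [initialPath, pathHom_cast, eqToHom_refl, Category.comp_id, Category.assoc,
    pathHom_subpath_trans]

theorem pathHom_initialPath_trans_finalPath (γ : Path x y) (t : I) :
    pathHom (initialPath γ t) ≫ pathHom (finalPath γ t) = pathHom γ := by
  simp only [initialPath, finalPath, pathHom_cast, eqToHom_refl, Category.comp_id,
    Category.id_comp, Category.assoc, reassoc_of% pathHom_subpath_trans, Path.subpath_zero_one]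
  simp

end PathClasses

theorem conjAlong_eq {x₀ x : X} (α : Path x₀ x) (g : FundamentalGroup X x) :
    conjAlong α g = pathHom α ≫ g ≫ inv (pathHom α) := by
  rw [← Groupoid.inv_eq_inv]; rfl

theorem conjAlong_loopClass {x₀ x : X} (α : Path x₀ x) (γ : Path x x) :
    conjAlong α (loopClass γ) = loopClass ((α.trans γ).trans α.symm) := by
  simp [conjAlong_eq, loopClass_eq_pathHom, pathHom_trans, pathHom_symm]

theorem mem_conjSubgroup_iff {x₀ x : X} {α : Path x₀ x}
    {H : Subgroup (FundamentalGroup X x₀)} {g : FundamentalGroup X x} :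
    g ∈ conjSubgroup α H ↔ conjAlong α g ∈ H :=
  Subgroup.mem_map_equiv

theorem π₁map_loopClass {A B : Type u} [TopologicalSpace A] [TopologicalSpace B]
    (f : C(A, B)) (a : A) (γ : Path a a) :
    π₁map f a (loopClass γ) = loopClass (γ.map f.continuous) :=
  (Path.Homotopic.Quotient.mk_map γ f).symm

theorem mem_iStar_iff {x : X} {U : Set X} {hx : x ∈ U} {g : FundamentalGroup X x} :
    g ∈ iStar x U hx ↔ ∃ γ : Path x x, range γ ⊆ U ∧ loopClass γ = g := by
  constructor
  · rintro ⟨-, ⟨g₀, rfl⟩, rfl⟩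
    obtain ⟨γ, rfl⟩ := Path.Homotopic.Quotient.mk_surjective (X := U) (x₀ := ⟨x, hx⟩) g₀
    exact ⟨γ.map continuous_subtype_val, by rintro - ⟨t, rfl⟩; exact (γ t).2,
      (π₁map_loopClass ⟨Subtype.val, continuous_subtype_val⟩ _ γ).symm⟩
  · rintro ⟨γ, hγ, rfl⟩
    let γU : Path (⟨x, hx⟩ : U) ⟨x, hx⟩ :=
      { toFun t := ⟨γ t, hγ (mem_range_self t)⟩
        continuous_toFun := γ.continuous.subtype_mk _
        source' := Subtype.ext γ.source
        target' := Subtype.ext γ.target }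
    exact ⟨_, ⟨loopClass γU, rfl⟩, π₁map_loopClass _ _ γU⟩

section HRel

variable {x₀ : X} (H : Subgroup (FundamentalGroup X x₀))

/-- The paper's relation `∼_H`, on homotopy classes of paths from `x₀`. -/
def HRel {y : X} (p q : mk x₀ ⟶ mk y) : Prop := p ≫ inv q ∈ H

def IsHSmall {z : X} (p : mk x₀ ⟶ mk z) (A : Set X) : Prop :=
  ∀ ⦃y : X⦄ (β β' : Path z y), range β ⊆ A → range β' ⊆ A →
    HRel H (p ≫ pathHom β) (p ≫ pathHom β')

def SemilocallyHSmall : Prop :=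
  ∀ (x : X) (α : Path x₀ x), ∃ U, IsOpen U ∧ x ∈ U ∧ IsHSmall H (pathHom α) U

variable {H}

theorem HRel.trans {y : X} {p q r : mk x₀ ⟶ mk y} (hpq : HRel H p q) (hqr : HRel H q r) :
    HRel H p r := by
  simpa [HRel] using H.mul_mem hqr hpq

theorem hRel_comp_right_iff {y z : X} {p q : mk x₀ ⟶ mk y} (r : mk y ⟶ mk z) :
    HRel H (p ≫ r) (q ≫ r) ↔ HRel H p q := by
  simp [HRel]

theorem HRel.mem_iff {p q : FundamentalGroup X x₀} (h : HRel H p q) : p ∈ H ↔ q ∈ H := by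
  have hp : p = q * FundamentalGroup.fromArrow (p ≫ inv q) := by simp [End.mul_def]
  rw [hp, H.mul_mem_cancel_right h]

theorem IsHSmall.comp {z z' : X} {p : mk x₀ ⟶ mk z} {A : Set X} (h : IsHSmall H p A)
    (c : Path z z') (hc : range c ⊆ A) : IsHSmall H (p ≫ pathHom c) A := by
  intro y β β' hβ hβ'
  simpa [pathHom_trans] using h (c.trans β) (c.trans β')
    (Path.range_trans_subset hc hβ) (Path.range_trans_subset hc hβ')

theorem isHSmall_of_iStar_le {x : X} {α : Path x₀ x} {U : Set X} {hx : x ∈ U}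
    (hU : iStar x U hx ≤ conjSubgroup α H) : IsHSmall H (pathHom α) U := by
  intro y β β' hβ hβ'
  have := mem_conjSubgroup_iff.mp (hU (mem_iStar_iff.mpr ⟨β.trans β'.symm,
    Path.range_trans_subset hβ (by rwa [Path.symm_range]), rfl⟩))
  simpa [HRel, conjAlong_eq, loopClass_eq_pathHom, pathHom_trans, pathHom_symm] using this

theorem hRel_initialPath_of_chain {y : X} {δ ε : Path x₀ y} {τ : ℕ → I} (hτ : τ 0 = 0)
    {A : ℕ → Set X} (n : ℕ)
    (hA : ∀ k ≤ n, IsHSmall H (pathHom (initialPath δ (τ k))) (A k))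
    (hδ : ∀ k ≤ n, range (δ.subpath (τ k) (τ (k + 1))) ⊆ A k)
    (hε : ∀ k ≤ n, range (ε.subpath (τ k) (τ (k + 1))) ⊆ A k)
    (hjoin : ∀ k < n, JoinedIn (A k ∩ A (k + 1)) (δ (τ (k + 1))) (ε (τ (k + 1))))
    (ω : Path (δ (τ (n + 1))) (ε (τ (n + 1)))) (hω : range ω ⊆ A n) :
    HRel H (pathHom (initialPath ε (τ (n + 1))))
      (pathHom (initialPath δ (τ (n + 1))) ≫ pathHom ω) := by
  induction n with
  | zero =>
    set c := (initialPath δ (τ 0)).symm.trans (initialPath ε (τ 0))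
    have hc : range c ⊆ A 0 := Path.range_trans_subset
      (by rw [Path.symm_range, range_initialPath_of_eq_zero δ hτ, singleton_subset_iff]
          exact hδ 0 le_rfl (Path.source_mem_range _))
      (by rw [range_initialPath_of_eq_zero ε hτ, singleton_subset_iff]
          exact hε 0 le_rfl (Path.source_mem_range _))
    have := hA 0 le_rfl (c.trans (ε.subpath (τ 0) (τ 1))) ((δ.subpath (τ 0) (τ 1)).trans ω)
      (Path.range_trans_subset hc (hε 0 le_rfl)) (Path.range_trans_subset (hδ 0 le_rfl) hω)
    simpa [c, pathHom_trans, pathHom_symm, pathHom_initialPath_trans_subpath,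
      reassoc_of% pathHom_initialPath_trans_subpath] using this
  | succ n ih =>
    obtain ⟨ρ, hρ⟩ := hjoin n n.lt_succ_self
    have hρA : range ρ ⊆ A n ∩ A (n + 1) := range_subset_iff.mpr hρ
    have h₁ := (hRel_comp_right_iff (pathHom (ε.subpath (τ (n + 1)) (τ (n + 2))))).mpr
      (ih (fun k hk => hA k (hk.trans n.le_succ)) (fun k hk => hδ k (hk.trans n.le_succ))
        (fun k hk => hε k (hk.trans n.le_succ)) (fun k hk => hjoin k (hk.trans n.lt_succ_self))
        ρ (hρA.trans inter_subset_left))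
    have h₂ := hA (n + 1) le_rfl (ρ.trans (ε.subpath (τ (n + 1)) (τ (n + 2))))
      ((δ.subpath (τ (n + 1)) (τ (n + 2))).trans ω)
      (Path.range_trans_subset (hρA.trans inter_subset_right) (hε (n + 1) le_rfl))
      (Path.range_trans_subset (hδ (n + 1) le_rfl) hω)
    rw [← pathHom_initialPath_trans_subpath ε (τ (n + 1)),
      ← pathHom_initialPath_trans_subpath δ (τ (n + 1))]
    simp only [pathHom_trans, Category.assoc] at h₁ h₂ ⊢
    exact h₁.trans h₂

theorem exists_isHSmall_subdivision
    (hH : SemilocallyHSmall H) {y : X} (δ : Path x₀ y) :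
    ∃ (τ : ℕ → I) (n : ℕ) (A : ℕ → Set X), τ 0 = 0 ∧ τ (n + 1) = 1 ∧ Monotone τ ∧
      ∀ k, IsOpen (A k) ∧ IsHSmall H (pathHom (initialPath δ (τ k))) (A k) ∧
        MapsTo δ (Icc (τ k) (τ (k + 1))) (A k) := by
  choose U hUo hU hUs using fun t => hH (δ t) (initialPath δ t)
  obtain ⟨τ, hτ0, hτ, ⟨n, hn⟩, hsub⟩ := unitInterval.exists_subdivision_subset
    (fun t => (hUo t).preimage δ.continuous) hU
  choose j hj using hsub
  refine ⟨τ, n, fun k => U (j k), hτ0, hn _ n.le_succ, hτ, fun k => ⟨hUo _, ?_, (hj k).2⟩⟩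
  rw [← pathHom_initialPath_trans_subpath δ (j k) (τ k)]
  exact (hUs (j k)).comp _ (by rw [Path.range_subpath]; exact image_subset_iff.mpr (hj k).1)

theorem eventually_hRel [LocallyPathConnectedSpace X]
    (hH : SemilocallyHSmall H) {y : X} (δ : Path x₀ y) :
    ∀ᶠ ε in 𝓝 δ, HRel H (pathHom ε) (pathHom δ) := by
  obtain ⟨τ, n, A, hτ0, hτn, hτ, hA⟩ := exists_isHSmall_subdivision hH δ
  choose hAo hAs hδA using hA
  have hδ k : range (δ.subpath (τ k) (τ (k + 1))) ⊆ A k :=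
    Path.range_subpath_subset (hτ k.le_succ) (hδA k)
  have hδ_mem k : δ (τ (k + 1)) ∈ A k ∩ A (k + 1) :=
    ⟨hδ k (Path.target_mem_range _), hδ (k + 1) (Path.source_mem_range _)⟩
  have hmaps : ∀ᶠ ε : Path x₀ y in 𝓝 δ, ∀ k ∈ {k | k ≤ n},
      MapsTo ε (Icc (τ k) (τ (k + 1))) (A k) :=
    (eventually_all_finite (finite_le_nat n)).mpr fun k _ =>
      Path.eventually_mapsTo isClosed_Icc.isCompact (hAo k) (hδA k)
  have hjoin : ∀ᶠ ε : Path x₀ y in 𝓝 δ, ∀ k ∈ {k | k < n},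
      ε (τ (k + 1)) ∈ pathComponentIn (A k ∩ A (k + 1)) (δ (τ (k + 1))) :=
    (eventually_all_finite (finite_lt_nat n)).mpr fun k _ =>
      (continuous_eval_const (τ (k + 1))).continuousAt.eventually_mem
        ((((hAo _).inter (hAo _)).pathComponentIn _).mem_nhds
          (mem_pathComponentIn_self (hδ_mem k)))
  filter_upwards [hmaps, hjoin] with ε hεA hεV
  have hω : range ((finalPath δ (τ (n + 1))).trans (finalPath ε (τ (n + 1))).symm) ⊆ A n :=
    Path.range_trans_subset
      (by rw [range_finalPath_of_eq_one δ hτn, singleton_subset_iff]; exact (hδ_mem n).1)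
      (by rw [Path.symm_range, range_finalPath_of_eq_one ε hτn, singleton_subset_iff]
          exact hεA n le_rfl ⟨hτ n.le_succ, le_rfl⟩)
  have := hRel_initialPath_of_chain hτ0 n (fun k _ => hAs k) (fun k _ => hδ k)
    (fun k hk => Path.range_subpath_subset (hτ k.le_succ) (hεA k hk)) hεV _ hω
  rw [← pathHom_initialPath_trans_finalPath ε (τ (n + 1)),
    ← pathHom_initialPath_trans_finalPath δ (τ (n + 1)),
    ← hRel_comp_right_iff (inv (pathHom (finalPath ε (τ (n + 1)))))]
  simpa [pathHom_trans, pathHom_symm] using this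

theorem isOpen_qtop_of_semilocallyHSmall [LocallyPathConnectedSpace X]
    (hH : SemilocallyHSmall H) :
    IsOpen[qtop X x₀] (H : Set (FundamentalGroup X x₀)) := by
  refine isOpen_coinduced.mpr (isOpen_iff_mem_nhds.mpr fun δ hδ => ?_)
  filter_upwards [eventually_hRel hH δ] with ε hε
  exact hε.mem_iff.mpr hδ

theorem exists_iStar_le_of_isOpen_qtop
    (hH : IsOpen[qtop X x₀] (H : Set (FundamentalGroup X x₀))) {x : X} (α : Path x₀ x) :
    ∃ (U : Set X) (_ : IsOpen U) (hx : x ∈ U), iStar x U hx ≤ conjSubgroup α H := by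
  have hconj : Continuous fun γ : Path x x => (α.trans γ).trans α.symm :=
    (continuous_const.path_trans continuous_id).path_trans continuous_const
  have hopen := (isOpen_coinduced.mp hH).preimage hconj
  have hrefl : Path.refl x ∈ (fun γ : Path x x => (α.trans γ).trans α.symm) ⁻¹'
      (loopClass ⁻¹' (H : Set (FundamentalGroup X x₀))) := by
    change loopClass _ ∈ H
    rw [← conjAlong_loopClass, conjAlong, show loopClass (Path.refl x) = 1 from rfl, map_one]
    exact H.one_mem
  obtain ⟨U, hUo, hxU, hU⟩ := Path.exists_isOpen_forall_range_subset_mem (hopen.mem_nhds hrefl)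
  refine ⟨U, hUo, hxU, fun g hg => ?_⟩
  obtain ⟨γ, hγ, rfl⟩ := mem_iStar_iff.mp hg
  rw [mem_conjSubgroup_iff, conjAlong_loopClass]
  exact hU γ hγ

end HRel

end GCPaper

theorem statement_18_general {X : Type u} [TopologicalSpace X]
    [LocallyPathConnectedSpace X] (x₀ : X) (H : Subgroup (FundamentalGroup X x₀)) :
    (∀ (x : X) (α : Path x₀ x), ∃ (U : Set X) (_ : IsOpen U) (hx : x ∈ U),
        iStar x U hx ≤ conjSubgroup α H) ↔
      IsOpen[qtop X x₀] (H : Set (FundamentalGroup X x₀)) :=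
  ⟨fun h => isOpen_qtop_of_semilocallyHSmall fun x α =>
      let ⟨U, hUo, hxU, hU⟩ := h x α
      ⟨U, hUo, hxU, isHSmall_of_iStar_le hU⟩,
    fun h _ α => exists_iStar_le_of_isOpen_qtop h α⟩

/-- For `X` connected and locally path connected and `H ≤ π₁(X,x₀)`, `X` is
semilocally path `H`-connected (for every path `α` from `x₀` there is an open neighbourhood
`U` of `α(1)` with `i_*π₁(U,α(1)) ≤ [α⁻¹Hα]`) if and only if `H` is an open subgroup of
`π₁^qtop(X,x₀)`. -/
theorem statement_18 {X : Type u} [TopologicalSpace X] [ConnectedSpace X]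
    [LocallyPathConnectedSpace X] (x₀ : X) (H : Subgroup (FundamentalGroup X x₀)) :
    (∀ (x : X) (α : Path x₀ x), ∃ (U : Set X) (_ : IsOpen U) (hx : x ∈ U),
        iStar x U hx ≤ conjSubgroup α H) ↔
      IsOpen[qtop X x₀] (H : Set (FundamentalGroup X x₀)) :=
  statement_18_general x₀ H
end
end
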